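/- arXiv:2501.12325 — 3 statements merged into one kernel-verified Lean document; each statement's English description precedes it below -/
import Mathlib

section
/- Fix a prime p and an m'×m matrix M with entries in F_p (equivalently, consider the congruence M x ≡ b mod p for integer vectors x). Fix an integer L with 1 ≤ L ≤ p and L = (L_1,...,L_m) with L ≤ L_i ≤ 2L for all i. Then: (1) for every integer vector b ∈ Z^{m'} and every integer vector N = (N_1,...,N_m), the number of integer tuples x with N_i ≤ x_i ≤ N_i + L_i and M x ≡ b (mod p) is at most the number of integer tuples x with −L_i ≤ x_i ≤ L_i and M x ≡ 0 (mod p); and (2) if M has full rank min{m',m} over F_p, then the number of integer tuples x with −L_i ≤ x_i ≤ L_i and M x ≡ 0 (mod p) is at most C(m) · L^{dim ker M}, where dim ker M is the dimension of the kernel of M over F_p and C(m) is a constant depending only on m. -/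
open Module Submodule

lemma exists_coord_finset {F : Type*} [Field F] {ι : Type*} [Fintype ι]
    (V : Submodule F (ι → F)) :
    ∃ s : Finset ι, s.card = Module.finrank F V ∧
      ∀ v : V, (∀ i ∈ s, (v : ι → F) i = 0) → v = 0 := by
  classical
  set φ : ι → Module.Dual F V := fun i => (LinearMap.proj i).comp V.subtype with hφ
  have hco : (Submodule.span F (Set.range φ)).dualCoannihilator = ⊥ := by
    rw [eq_bot_iff]
    intro v hv
    rw [Submodule.mem_dualCoannihilator] at hv
    have hz : ∀ i, (v : ι → F) i = 0 := fun i => hv (φ i) (Submodule.subset_span ⟨i, rfl⟩)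
    simpa [Submodule.mem_bot] using Subtype.ext (funext hz)
  have hrank : Module.finrank F (Submodule.span F (Set.range φ)) = Module.finrank F V := by
    have h := Subspace.finrank_add_finrank_dualCoannihilator_eq (Submodule.span F (Set.range φ))
    rw [hco, finrank_bot] at h
    omega
  obtain ⟨t, hts, hspan, hli⟩ := exists_linearIndependent F (Set.range φ)
  have hfin : t.Finite := hli.set_finite_of_isNoetherian
  haveI : Fintype t := hfin.fintype
  have hcardt : t.toFinset.card = Module.finrank F V := by
    have h := finrank_span_set_eq_card hli
    rw [hspan, hrank] at h
    exact h.symm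
  choose g hg using fun f : t => (hts f.2 : (f : Module.Dual F V) ∈ Set.range φ)
  have hginj : Function.Injective g := by
    intro a b h
    apply Subtype.ext
    rw [← hg a, ← hg b, h]
  refine ⟨Finset.image g Finset.univ, ?_, ?_⟩
  · rw [Finset.card_image_of_injective _ hginj, Finset.card_univ, ← Set.toFinset_card, hcardt]
  · intro v hv
    have hker : ∀ ψ ∈ Submodule.span F t, ψ v = 0 := by
      intro ψ hψ
      induction hψ using Submodule.span_induction with
      | mem f hf =>
        rw [← show φ (g ⟨f, hf⟩) = f from hg ⟨f, hf⟩]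
        exact hv (g ⟨f, hf⟩) (Finset.mem_image_of_mem _ (Finset.mem_univ _))
      | zero => simp
      | add _ _ _ _ h1 h2 => simp [h1, h2]
      | smul a _ _ h => simp [h]
    have hmem : v ∈ (Submodule.span F t).dualCoannihilator :=
      (Submodule.mem_dualCoannihilator v).mpr hker
    rw [hspan, hco, Submodule.mem_bot] at hmem
    exact hmem

/-- Counting via an injection into a finset. -/
lemma ncard_le_card_of_injOn {α β : Type*} {S : Set α} {T : Finset β} (f : α → β)
    (hinj : Set.InjOn f S) (hmaps : ∀ x ∈ S, f x ∈ T) : S.ncard ≤ T.card := by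
  calc S.ncard = (f '' S).ncard := (Set.ncard_image_of_injOn hinj).symm
    _ ≤ (↑T : Set β).ncard := by
        apply Set.ncard_le_ncard _ T.finite_toSet
        rintro _ ⟨x, hx, rfl⟩
        exact hmaps x hx
    _ = T.card := Set.ncard_coe_finset T

/-- **Lemma 4.1.** Counting solutions of `M x ≡ b (mod p)` in boxes: (1) the count over
any shifted box `[N, N+L]` is at most the count of `M x ≡ 0` over the symmetric box
`[−L, L]`; (2) if `M` has full rank `min{m',m}`, the homogeneous count over `[−L, L]` is
`≪_m L^{dim ker M}`. -/
theorem bounded_solutions_linear_system (m : ℕ) :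
    ∃ C : ℝ, 0 < C ∧
      ∀ (p : ℕ) [Fact p.Prime],
      ∀ (m' : ℕ) (M : Matrix (Fin m') (Fin m) (ZMod p)),
      ∀ (L : ℤ) (Lv : Fin m → ℤ),
        1 ≤ L → L ≤ (p : ℤ) →
        (∀ i, L ≤ Lv i ∧ Lv i ≤ 2 * L) →
        (∀ (b : Fin m' → ℤ) (N : Fin m → ℤ),
          Set.ncard {x : Fin m → ℤ |
              (∀ i, N i ≤ x i ∧ x i ≤ N i + Lv i) ∧
              M.mulVec (fun i => ((x i : ℤ) : ZMod p)) = fun j => ((b j : ℤ) : ZMod p)} ≤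
          Set.ncard {x : Fin m → ℤ |
              (∀ i, -Lv i ≤ x i ∧ x i ≤ Lv i) ∧
              M.mulVec (fun i => ((x i : ℤ) : ZMod p)) = 0}) ∧
        (M.rank = min m' m →
          (Set.ncard {x : Fin m → ℤ |
              (∀ i, -Lv i ≤ x i ∧ x i ≤ Lv i) ∧
              M.mulVec (fun i => ((x i : ℤ) : ZMod p)) = 0} : ℝ) ≤
            C * (L : ℝ) ^ (Module.finrank (ZMod p) (LinearMap.ker M.mulVecLin))) := by
  classical
  refine ⟨5 ^ m, by positivity, ?_⟩
  intro p _ m' M L Lv hL1 hLp hLv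
  have hp : (0 : ℤ) < (p : ℤ) := by
    exact_mod_cast (Fact.out : p.Prime).pos
  set S0 : Set (Fin m → ℤ) := {x : Fin m → ℤ |
      (∀ i, -Lv i ≤ x i ∧ x i ≤ Lv i) ∧
      M.mulVec (fun i => ((x i : ℤ) : ZMod p)) = 0} with hS0
  constructor
  · -- Part 1: translation argument
    intro b N
    set S : Set (Fin m → ℤ) := {x : Fin m → ℤ |
        (∀ i, N i ≤ x i ∧ x i ≤ N i + Lv i) ∧
        M.mulVec (fun i => ((x i : ℤ) : ZMod p)) = fun j => ((b j : ℤ) : ZMod p)} with hS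
    rcases S.eq_empty_or_nonempty with hE | ⟨x0, hx0⟩
    · simp [hE]
    -- S0 is finite
    have hS0fin : S0.Finite := by
      apply Set.Finite.subset
        ((Fintype.piFinset fun i => Finset.Icc (-Lv i) (Lv i)).finite_toSet)
      intro x hx
      simp only [Finset.mem_coe, Fintype.mem_piFinset, Finset.mem_Icc]
      exact hx.1
    have himg : (fun x => x - x0) '' S ⊆ S0 := by
      rintro _ ⟨x, hx, rfl⟩
      constructor
      · intro i
        have h1 := hx.1 i
        have h2 := hx0.1 i
        constructor
        · simp only [Pi.sub_apply]; linarith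
        · simp only [Pi.sub_apply]; linarith
      · have hcast : (fun i => (((x - x0) i : ℤ) : ZMod p)) =
            (fun i => ((x i : ℤ) : ZMod p)) - (fun i => ((x0 i : ℤ) : ZMod p)) := by
          funext i
          simp only [Pi.sub_apply]
          push_cast
          ring
        rw [hcast, Matrix.mulVec_sub, hx.2, hx0.2]
        simp
    calc S.ncard = ((fun x => x - x0) '' S).ncard :=
          (Set.ncard_image_of_injOn (sub_left_injective.injOn)).symm
      _ ≤ S0.ncard := Set.ncard_le_ncard himg hS0fin
  · -- Part 2
    intro _hrank
    obtain ⟨s, hscard, hsep⟩ := exists_coord_finset (LinearMap.ker M.mulVecLin)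
    set k := Module.finrank (ZMod p) (LinearMap.ker M.mulVecLin) with hk
    have hkm : k ≤ m := by
      rw [← hscard]
      simpa using Finset.card_le_card (Finset.subset_univ s)
    set T : Finset (Fin m → ℤ) := Fintype.piFinset fun i =>
      Finset.Icc (if i ∈ s then -Lv i else 0) (if i ∈ s then Lv i else 4) with hT
    set Φ : (Fin m → ℤ) → (Fin m → ℤ) :=
      fun x i => if i ∈ s then x i else (x i + Lv i) / p with hΦ
    -- injectivity
    have hinj : Set.InjOn Φ S0 := by
      intro x hx y hy hxy
      -- the reductions mod p lie in the kernel
      have hxk : (fun i => ((x i : ℤ) : ZMod p)) ∈ LinearMap.ker M.mulVecLin := by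
        rw [LinearMap.mem_ker, Matrix.mulVecLin_apply]; exact hx.2
      have hyk : (fun i => ((y i : ℤ) : ZMod p)) ∈ LinearMap.ker M.mulVecLin := by
        rw [LinearMap.mem_ker, Matrix.mulVecLin_apply]; exact hy.2
      have hs_eq : ∀ i ∈ s, x i = y i := by
        intro i hi
        have := congrFun hxy i
        simpa [hΦ, if_pos hi] using this
      have hmodeq : ∀ i, ((x i : ℤ) : ZMod p) = ((y i : ℤ) : ZMod p) := by
        have hzero : (⟨_, hxk⟩ - ⟨_, hyk⟩ : LinearMap.ker M.mulVecLin) = 0 := by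
          apply hsep
          intro i hi
          have : ((x i : ℤ) : ZMod p) = ((y i : ℤ) : ZMod p) := by
            rw [hs_eq i hi]
          simpa [Submodule.coe_sub] using sub_eq_zero_of_eq this
        have h' := sub_eq_zero.mp hzero
        have h'' := congrArg (Subtype.val) h'
        intro i
        exact congrFun h'' i
      funext i
      by_cases hi : i ∈ s
      · exact hs_eq i hi
      · have hq : (x i + Lv i) / p = (y i + Lv i) / p := by
          have := congrFun hxy i
          simpa [hΦ, if_neg hi] using this
        have hmod : (x i + Lv i) % p = (y i + Lv i) % p := by
          have : ((x i + Lv i : ℤ) : ZMod p) = ((y i + Lv i : ℤ) : ZMod p) := by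
            push_cast
            rw [hmodeq i]
          exact (ZMod.intCast_eq_intCast_iff _ _ _).mp this
        have h1 := Int.mul_ediv_add_emod (x i + Lv i) p
        have h2 := Int.mul_ediv_add_emod (y i + Lv i) p
        have : x i + Lv i = y i + Lv i := by rw [← h1, ← h2, hq, hmod]
        linarith
    -- maps into T
    have hmaps : ∀ x ∈ S0, Φ x ∈ T := by
      intro x hx
      rw [hT, Fintype.mem_piFinset]
      intro i
      rw [Finset.mem_Icc]
      by_cases hi : i ∈ s
      · simp only [hΦ, if_pos hi]
        exact hx.1 i
      · simp only [hΦ, if_neg hi]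
        have h1 := (hx.1 i).1
        have h2 := (hx.1 i).2
        have hLvi := hLv i
        constructor
        · exact Int.ediv_nonneg (by linarith) hp.le
        · calc (x i + Lv i) / p ≤ (4 * p) / p := Int.ediv_le_ediv hp (by linarith)
            _ = 4 := Int.mul_ediv_cancel 4 hp.ne'
    have hcount : S0.ncard ≤ T.card := ncard_le_card_of_injOn Φ hinj hmaps
    -- now bound T.card in ℝ
    have hcard : (T.card : ℝ) ≤ 5 ^ m * (L : ℝ) ^ k := by
      rw [hT, Fintype.card_piFinset, Nat.cast_prod]
      have hbound : ∀ i : Fin m,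
          (((Finset.Icc (if i ∈ s then -Lv i else 0) (if i ∈ s then Lv i else 4)).card : ℕ) : ℝ)
            ≤ (if i ∈ s then 5 * (L : ℝ) else 5) := by
        intro i
        rw [Int.card_Icc]
        by_cases hi : i ∈ s
        · simp only [if_pos hi]
          have hLvi := hLv i
          have h1 : (0 : ℤ) ≤ Lv i + 1 - -Lv i := by linarith
          rw [show ((Lv i + 1 - -Lv i).toNat : ℝ) = ((Lv i + 1 - -Lv i : ℤ) : ℝ) by
            exact_mod_cast congrArg (Int.cast : ℤ → ℝ) (Int.toNat_of_nonneg h1)]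
          push_cast
          have : (Lv i : ℝ) ≤ 2 * (L : ℝ) := by exact_mod_cast hLvi.2
          have : (1 : ℝ) ≤ (L : ℝ) := by exact_mod_cast hL1
          push_cast at *
          linarith
        · simp only [if_neg hi]
          norm_num
      calc (∏ i, (((Finset.Icc (if i ∈ s then -Lv i else 0)
              (if i ∈ s then Lv i else 4)).card : ℕ) : ℝ))
          ≤ ∏ i, (if i ∈ s then 5 * (L : ℝ) else 5) := by
            apply Finset.prod_le_prod
            · intro i _; positivity
            · intro i _; exact hbound i
        _ = (5 * (L : ℝ)) ^ k * 5 ^ (m - k) := by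
            rw [Finset.prod_ite]
            simp only [Finset.prod_const]
            congr 1
            · congr 1
              rw [← hscard]
              congr 1
              ext i; simp
            · congr 1
              have h1 : (Finset.univ.filter (fun i => i ∈ s)).card +
                  (Finset.univ.filter (fun i => ¬ i ∈ s)).card = m := by
                rw [Finset.card_filter_add_card_filter_not]
                simp
              have h2 : (Finset.univ.filter (fun i => i ∈ s)).card = k := by
                rw [← hscard]; congr 1; ext i; simp
              omega
        _ = 5 ^ m * (L : ℝ) ^ k := by
            rw [mul_pow]
            have : (5 : ℝ) ^ k * 5 ^ (m - k) = 5 ^ m := by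
              rw [← pow_add]
              congr 1
              omega
            ring_nf
            rw [mul_assoc, ← pow_add, Nat.add_sub_cancel' hkm]
    calc (S0.ncard : ℝ) ≤ (T.card : ℝ) := by exact_mod_cast hcount
      _ ≤ 5 ^ m * (L : ℝ) ^ k := hcard
end

section
/- Fix a prime p and an m'×m matrix M over F_p. Fix an integer L with 1 ≤ L ≤ p and L = (L_1,...,L_m) with L ≤ L_i ≤ 2L for all i. Then for every integer vector b ∈ Z^{m'}, the number of integer tuples x with −L_i ≤ x_i ≤ L_i for all i and M x ≡ b (mod p) is at most C(m) times the number of integer tuples x with −L_i ≤ x_i ≤ L_i for all i and M x ≡ 0 (mod p), where C(m) is a constant depending only on m. -/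
/-- **Lemma 4.3.** For an `m'×m` matrix `M` over `𝔽_p`, `1 ≤ L ≤ p`, and a box
`D_L = [−L,L]` with comparable side lengths `L ≤ L_i ≤ 2L`, the number of solutions of
`M x ≡ b (mod p)` in `D_L` is `≪_m` the number of solutions of `M x ≡ 0 (mod p)` in
`D_L`, for any `b`. -/
theorem coset_count_le_kernel_count (m : ℕ) :
    ∃ C : ℝ, 0 < C ∧
      ∀ (p : ℕ) [Fact p.Prime],
      ∀ (m' : ℕ) (M : Matrix (Fin m') (Fin m) (ZMod p)),
      ∀ (L : ℤ) (Lv : Fin m → ℤ),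
        1 ≤ L → L ≤ (p : ℤ) →
        (∀ i, L ≤ Lv i ∧ Lv i ≤ 2 * L) →
        ∀ (b : Fin m' → ℤ),
          (Set.ncard {x : Fin m → ℤ |
              (∀ i, -Lv i ≤ x i ∧ x i ≤ Lv i) ∧
              M.mulVec (fun i => ((x i : ℤ) : ZMod p)) = fun j => ((b j : ℤ) : ZMod p)} : ℝ) ≤
            C * (Set.ncard {x : Fin m → ℤ |
              (∀ i, -Lv i ≤ x i ∧ x i ≤ Lv i) ∧
              M.mulVec (fun i => ((x i : ℤ) : ZMod p)) = 0} : ℝ) := by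
  classical
  refine ⟨(5 : ℝ) ^ m, by positivity, ?_⟩
  intro p _ m' M L Lv hL hLp hLv b
  set S : Set (Fin m → ℤ) := {x : Fin m → ℤ |
      (∀ i, -Lv i ≤ x i ∧ x i ≤ Lv i) ∧
      M.mulVec (fun i => ((x i : ℤ) : ZMod p)) = fun j => ((b j : ℤ) : ZMod p)} with hSdef
  set K : Set (Fin m → ℤ) := {x : Fin m → ℤ |
      (∀ i, -Lv i ≤ x i ∧ x i ≤ Lv i) ∧
      M.mulVec (fun i => ((x i : ℤ) : ZMod p)) = 0} with hKdef
  have hLpos : ∀ i, (0 : ℤ) < Lv i := fun i => lt_of_lt_of_le hL (hLv i).1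
  -- finiteness
  have hboxfin : (Set.pi Set.univ (fun i : Fin m => Set.Icc (-Lv i) (Lv i))).Finite :=
    Set.Finite.pi fun i => Set.finite_Icc _ _
  have hSfin : S.Finite := hboxfin.subset (by
    intro x hx
    intro i _
    exact ⟨(hx.1 i).1, (hx.1 i).2⟩)
  have hKfin : K.Finite := hboxfin.subset (by
    intro x hx
    intro i _
    exact ⟨(hx.1 i).1, (hx.1 i).2⟩)
  -- main Nat inequality
  have main : S.ncard ≤ 5 ^ m * K.ncard := by
    rcases Set.eq_empty_or_nonempty S with hS | hS
    · simp [hS]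
    obtain ⟨x0, hx0⟩ := hS
    -- the "double kernel" set
    set K2 : Set (Fin m → ℤ) := {y : Fin m → ℤ |
        (∀ i, -(2 * Lv i) ≤ y i ∧ y i ≤ 2 * Lv i) ∧
        M.mulVec (fun i => ((y i : ℤ) : ZMod p)) = 0} with hK2def
    -- block index function
    set q : (Fin m → ℤ) → (Fin m → Fin 5) :=
      fun y i => ⟨min 4 ((y i + 2 * Lv i) / Lv i).toNat, by omega⟩ with hqdef
    -- same block index implies coordinates within Lv of each other
    have hq : ∀ y y', y ∈ K2 → y' ∈ K2 → q y = q y' →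
        ∀ i, -Lv i ≤ y i - y' i ∧ y i - y' i ≤ Lv i := by
      intro y y' hy hy' hqq i
      have h1 := hy.1 i
      have h2 := hy'.1 i
      set t : ℤ := y i + 2 * Lv i with htdef
      set t' : ℤ := y' i + 2 * Lv i with ht'def
      have hdivb : ∀ s : ℤ, 0 ≤ s → s ≤ 4 * Lv i → 0 ≤ s / Lv i ∧ s / Lv i ≤ 4 := by
        intro s hs hs4
        refine ⟨Int.ediv_nonneg hs (hLpos i).le, ?_⟩
        calc s / Lv i ≤ (4 * Lv i) / Lv i := Int.ediv_le_ediv (hLpos i) hs4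
          _ = 4 := Int.mul_ediv_cancel 4 (ne_of_gt (hLpos i))
      have hb1 := hdivb t (by omega) (by omega)
      have hb2 := hdivb t' (by omega) (by omega)
      have hv : min 4 (t / Lv i).toNat = min 4 (t' / Lv i).toNat :=
        congrArg Fin.val (congrFun hqq i)
      have haa : t / Lv i = t' / Lv i := by omega
      have e1 := Int.mul_ediv_add_emod t (Lv i)
      have e2 := Int.mul_ediv_add_emod t' (Lv i)
      have r1 := Int.emod_nonneg t (ne_of_gt (hLpos i))
      have r2 := Int.emod_lt_of_pos t (hLpos i)
      have r3 := Int.emod_nonneg t' (ne_of_gt (hLpos i))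
      have r4 := Int.emod_lt_of_pos t' (hLpos i)
      rw [haa] at e1
      omega
    -- translation by a solution lands in K2
    have hsub : ∀ x ∈ S, x - x0 ∈ K2 := by
      intro x hx
      constructor
      · intro i
        have := hx.1 i
        have := hx0.1 i
        have h3 := hLpos i
        simp only [Pi.sub_apply]
        omega
      · have hcast : (fun i => (((x - x0) i : ℤ) : ZMod p)) =
            (fun i => ((x i : ℤ) : ZMod p)) - (fun i => ((x0 i : ℤ) : ZMod p)) := by
          funext i
          simp [Pi.sub_apply]
        rw [hcast, Matrix.mulVec_sub, hx.2, hx0.2, sub_self]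
    -- differences of elements of K2 are in the kernel
    have hker2 : ∀ y y', y ∈ K2 → y' ∈ K2 →
        M.mulVec (fun i => (((y - y') i : ℤ) : ZMod p)) = 0 := by
      intro y y' hy hy'
      have hcast : (fun i => (((y - y') i : ℤ) : ZMod p)) =
          (fun i => ((y i : ℤ) : ZMod p)) - (fun i => ((y' i : ℤ) : ZMod p)) := by
        funext i
        simp [Pi.sub_apply]
      rw [hcast, Matrix.mulVec_sub, hy.2, hy'.2, sub_self]
    -- choice of representatives in each block
    set Y : (Fin m → Fin 5) → (Fin m → ℤ) :=
      fun c => if h : ∃ y, y ∈ K2 ∧ q y = c then h.choose else 0 with hYdef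
    have hY : ∀ z ∈ K2, Y (q z) ∈ K2 ∧ q (Y (q z)) = q z := by
      intro z hz
      have hex : ∃ y, y ∈ K2 ∧ q y = q z := ⟨z, hz, rfl⟩
      have hspec := hex.choose_spec
      simp only [hYdef, dif_pos hex]
      exact hspec
    -- the injection
    set f : (Fin m → ℤ) → (Fin m → ℤ) × (Fin m → Fin 5) :=
      fun x => (x - x0 - Y (q (x - x0)), q (x - x0)) with hfdef
    have hmaps : ∀ x ∈ S, (f x).1 ∈ K := by
      intro x hx
      have hz : x - x0 ∈ K2 := hsub x hx
      have hYz := hY _ hz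
      constructor
      · intro i
        have := hq _ _ hz hYz.1 hYz.2.symm i
        simp only [Pi.sub_apply] at this ⊢
        omega
      · exact hker2 _ _ hz hYz.1
    have hinj : ∀ x ∈ S, ∀ x' ∈ S, f x = f x' → x = x' := by
      intro x _ x' _ hf
      have h2 : q (x - x0) = q (x' - x0) := congrArg Prod.snd hf
      have h1 : x - x0 - Y (q (x - x0)) = x' - x0 - Y (q (x' - x0)) := congrArg Prod.fst hf
      rw [h2] at h1
      have : x - x0 = x' - x0 := by
        have := sub_left_injective h1
        exact this
      exact sub_left_injective this
    -- counting
    rw [Set.ncard_eq_toFinset_card S hSfin, Set.ncard_eq_toFinset_card K hKfin]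
    have hcard : hSfin.toFinset.card ≤
        (hKfin.toFinset ×ˢ (Finset.univ : Finset (Fin m → Fin 5))).card := by
      apply Finset.card_le_card_of_injOn f
      · intro x hx
        rw [Finset.mem_coe, Set.Finite.mem_toFinset] at hx
        rw [Finset.mem_coe, Finset.mem_product]
        exact ⟨by rw [Set.Finite.mem_toFinset]; exact hmaps x hx, Finset.mem_univ _⟩
      · intro x hx x' hx' hf
        simp only [Finset.mem_coe, Set.Finite.mem_toFinset] at hx hx'
        exact hinj x hx x' hx' hf
    rw [Finset.card_product] at hcard
    have hc5 : (Finset.univ : Finset (Fin m → Fin 5)).card = 5 ^ m := by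
      simp
    rw [hc5] at hcard
    exact hcard.trans_eq (mul_comm _ _)
  -- conclude over ℝ
  have : (S.ncard : ℝ) ≤ (5 : ℝ) ^ m * (K.ncard : ℝ) := by
    exact_mod_cast main
  exact this
end

section
/- Fix a prime p, an integer n ≥ 1, and a partition (n_1,...,n_s) of n, and for each 1 ≤ i ≤ s fix ω_i ∈ F_{p^{n_i}} such that 1, ω_i, ..., ω_i^{n_i−1} is an F_p-basis of F_{p^{n_i}}. Let z = (z_1,...,z_s) with z_i ∈ F_{p^{n_i}} \ {0}, and let λ_i(x) = L_{i,1}(x) + L_{i,2}(x)ω_i + ⋯ + L_{i,n_i}(x)ω_i^{n_i−1} and λ'_i(y) = L'_{i,1}(y) + L'_{i,2}(y)ω_i + ⋯ + L'_{i,n_i}(y)ω_i^{n_i−1}, where the n×n matrices A and A' of coefficients of the linear forms L_{i,j} and L'_{i,j} are nonsingular mod p. Define the lattice 𝓛_z = {(x,y) ∈ Z^{2n} : λ_i(x) = z_i λ'_i(y) in F_{p^{n_i}} for all 1 ≤ i ≤ s}. Then there exist linear forms L''_{i,j}, L'''_{i,j} ∈ F_p[X_1,...,X_n] (1 ≤ i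 ≤ s, 1 ≤ j ≤ n_i) whose n×n coefficient matrices A'' and A''' are nonsingular mod p, such that, setting λ''_i(v) = L''_{i,1}(v) + ⋯ + L''_{i,n_i}(v)ω_i^{n_i−1} and λ'''_i(u) = L'''_{i,1}(u) + ⋯ + L'''_{i,n_i}(u)ω_i^{n_i−1}, the scaled dual lattice satisfies p𝓛_z* = {(u,v) ∈ Z^{2n} : λ''_i(v) = z_i λ'''_i(u) in F_{p^{n_i}} for all 1 ≤ i ≤ s}. -/
open Function Finset

set_option linter.unusedSectionVars false

section Aux

variable {F : Type*} [Field F] {n : ℕ} {ι : Type*} [Fintype ι] [DecidableEq ι]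

/-- standard basis vector -/
def stdv (k : Fin n) : Fin n → F := fun j => if k = j then 1 else 0

lemma dot_stdv (x : Fin n → F) (k : Fin n) : ∑ j, x j * stdv (F := F) k j = x k := by
  simp [stdv, mul_ite, eq_comm]

lemma stdv_dot (x : Fin n → F) (k : Fin n) : ∑ j, stdv (F := F) k j * x j = x k := by
  simp [stdv, ite_mul, eq_comm]

lemma eq_sum_stdv (x : Fin n → F) : x = ∑ k, x k • stdv (F := F) k :=
  pi_eq_sum_univ x

noncomputable def dotL (G : ι → Fin n → F) : (Fin n → F) →ₗ[F] (ι → F) where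
  toFun x := fun q => ∑ k, G q k * x k
  map_add' x y := by
    funext q
    simp [mul_add, Finset.sum_add_distrib]
  map_smul' c x := by
    funext q
    simp only [RingHom.id_apply, Pi.smul_apply, smul_eq_mul, Finset.mul_sum]
    exact Finset.sum_congr rfl fun k _ => by ring

lemma dotL_apply (G : ι → Fin n → F) (x : Fin n → F) (q : ι) :
    dotL G x q = ∑ k, G q k * x k := rfl

lemma inj_of_zero {M N : Type*} [AddCommGroup M] [Module F M] [AddCommGroup N] [Module F N]
    (f : M →ₗ[F] N) (h : ∀ x, f x = 0 → x = 0) : Injective f :=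
  LinearMap.ker_eq_bot.mp (LinearMap.ker_eq_bot'.mpr h)

lemma dotL_bijective [Nonempty ι] {G : ι → Fin n → F} (hcard : Fintype.card ι = n)
    (hG : LinearIndependent F G) : Function.Bijective (dotL G) := by
  have hfr : Fintype.card ι = Module.finrank F (Fin n → F) := by
    rw [Module.finrank_fin_fun]; exact hcard
  have hspan : Submodule.span F (Set.range G) = ⊤ := by
    have h := (basisOfLinearIndependentOfCardEqFinrank hG hfr).span_eq
    rwa [coe_basisOfLinearIndependentOfCardEqFinrank] at h
  have hinj : Injective (dotL G) := by
    apply inj_of_zero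
    intro x hx
    have hdot : ∀ w ∈ Submodule.span F (Set.range G), ∑ k, w k * x k = 0 := by
      intro w hw
      induction hw using Submodule.span_induction with
      | mem w hw =>
          obtain ⟨q, rfl⟩ := hw
          exact congrFun hx q
      | zero => simp
      | add w₁ w₂ _ _ h1 h2 =>
          simp only [Pi.add_apply, add_mul, Finset.sum_add_distrib, h1, h2, add_zero]
      | smul c w _ h1 =>
          simp only [Pi.smul_apply, smul_eq_mul, mul_assoc, ← Finset.mul_sum, h1, mul_zero]
    funext k
    have := hdot (stdv k) (by rw [hspan]; trivial)
    rwa [stdv_dot] at this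
  refine ⟨hinj, ?_⟩
  exact (LinearMap.injective_iff_surjective_of_finrank_eq_finrank
    (by rw [Module.finrank_fin_fun, Module.finrank_fintype_fun_eq_card, hcard])).mp hinj

lemma linearIndependent_of_dotL_surjective {G : ι → Fin n → F}
    (hsurj : Surjective (dotL G)) : LinearIndependent F G := by
  rw [Fintype.linearIndependent_iff]
  intro c hc q0
  obtain ⟨x, hx⟩ := hsurj (fun q => if q0 = q then 1 else 0)
  have h1 : ∑ q, c q * dotL G x q = c q0 := by
    rw [hx]; simp [mul_ite, eq_comm]
  have h2 : ∑ q, c q * dotL G x q = ∑ k, (∑ q, c q • G q) k * x k := by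
    simp only [dotL_apply, Finset.mul_sum, Finset.sum_apply, Pi.smul_apply, smul_eq_mul,
      Finset.sum_mul]
    rw [Finset.sum_comm]
    exact Finset.sum_congr rfl fun k _ => Finset.sum_congr rfl fun q _ => by ring
  rw [h2, hc] at h1
  simp at h1
  exact h1.symm

lemma linear_eq_dot (Ψ : (Fin n → F) →ₗ[F] (ι → F)) (v : Fin n → F) (q : ι) :
    Ψ v q = ∑ k, Ψ (stdv k) q * v k := by
  conv_lhs => rw [eq_sum_stdv v]
  rw [map_sum]
  simp only [Finset.sum_apply, map_smul, Pi.smul_apply, smul_eq_mul]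
  exact Finset.sum_congr rfl fun k _ => by ring

end Aux



/-- `λ_i(x) = L_{i,1}(x) + L_{i,2}(x)·ω_i + ⋯ + L_{i,n_i}(x)·ω_i^{n_i−1} ∈ 𝔽_{p^{n_i}}`,
for an integer vector `x` (reduced mod `p`). -/
noncomputable def lamForm (p : ℕ) [Fact p.Prime] (n s : ℕ) (ns : Fin s → ℕ)
    (ω : (i : Fin s) → GaloisField p (ns i))
    (L : (i : Fin s) → Fin (ns i) → Fin n → ZMod p)
    (i : Fin s) (x : Fin n → ℤ) : GaloisField p (ns i) :=
  ∑ j : Fin (ns i), algebraMap (ZMod p) (GaloisField p (ns i))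
      (∑ k : Fin n, L i j k * ((x k : ℤ) : ZMod p)) * ω i ^ (j : ℕ)

/-- The lattice `𝓛_z = {(x,y) ∈ ℤ^{2n} : λ_i(x) = z_i·λ'_i(y) in 𝔽_{p^{n_i}} ∀ i}`, as a
subset of `ℝ^{2n}`. -/
noncomputable def latticeSetZ (p : ℕ) [Fact p.Prime] (n s : ℕ) (ns : Fin s → ℕ)
    (ω : (i : Fin s) → GaloisField p (ns i))
    (z : (i : Fin s) → GaloisField p (ns i))
    (L L' : (i : Fin s) → Fin (ns i) → Fin n → ZMod p) :
    Set ((Fin n ⊕ Fin n) → ℝ) :=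
  {x | ∃ w : (Fin n ⊕ Fin n) → ℤ,
    (∀ i, x i = ((w i : ℤ) : ℝ)) ∧
    ∀ i : Fin s, lamForm p n s ns ω L i (fun k => w (Sum.inl k)) =
      z i * lamForm p n s ns ω L' i (fun k => w (Sum.inr k))}

/-- The dual of a set `S ⊆ ℝ^ι`: all `u` with `⟨u,x⟩ ∈ ℤ` for every `x ∈ S`. -/
def dualSet {ι : Type*} [Fintype ι] (S : Set (ι → ℝ)) : Set (ι → ℝ) :=
  {u | ∀ x ∈ S, ∃ z : ℤ, ∑ i, u i * x i = (z : ℝ)}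


section Main

variable (p : ℕ) [Fact p.Prime] {n s : ℕ} {ns : Fin s → ℕ}
  (ω : (i : Fin s) → GaloisField p (ns i))

/-- the λ map on `𝔽_p`-vectors, bundled as a linear map. -/
noncomputable def lamMap (L : (i : Fin s) → Fin (ns i) → Fin n → ZMod p) :
    (Fin n → ZMod p) →ₗ[ZMod p] ((i : Fin s) → GaloisField p (ns i)) where
  toFun a := fun i => ∑ j, algebraMap (ZMod p) (GaloisField p (ns i))
      (∑ k, L i j k * a k) * ω i ^ (j : ℕ)
  map_add' a b := by
    funext i
    simp only [Pi.add_apply, mul_add, Finset.sum_add_distrib, map_add, add_mul]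
  map_smul' c a := by
    funext i
    simp only [RingHom.id_apply, Pi.smul_apply, smul_eq_mul]
    rw [Algebra.smul_def, Finset.mul_sum]
    refine Finset.sum_congr rfl fun j _ => ?_
    rw [← mul_assoc, ← map_mul, Finset.mul_sum]
    congr 2
    exact Finset.sum_congr rfl fun k _ => by ring

lemma lamMap_apply (L : (i : Fin s) → Fin (ns i) → Fin n → ZMod p)
    (a : Fin n → ZMod p) (i : Fin s) :
    lamMap p ω L a i = ∑ j, algebraMap (ZMod p) (GaloisField p (ns i))
      (∑ k, L i j k * a k) * ω i ^ (j : ℕ) := rfl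

lemma lamForm_eq (L : (i : Fin s) → Fin (ns i) → Fin n → ZMod p)
    (x : Fin n → ℤ) (i : Fin s) :
    lamForm p n s ns ω L i x = lamMap p ω L (fun k => ((x k : ℤ) : ZMod p)) i := rfl

/-- reconstruction map from sigma-coordinates. -/
noncomputable def phiMap : ((q : Σ i : Fin s, Fin (ns i)) → ZMod p) →ₗ[ZMod p]
    ((i : Fin s) → GaloisField p (ns i)) where
  toFun c := fun i => ∑ j, c ⟨i, j⟩ • ω i ^ (j : ℕ)
  map_add' a b := by
    funext i
    simp [add_smul, Finset.sum_add_distrib]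
  map_smul' c a := by
    funext i
    simp [Finset.smul_sum, smul_smul]

lemma phiMap_bijective
    (b : (i : Fin s) → Module.Basis (Fin (ns i)) (ZMod p) (GaloisField p (ns i)))
    (hb : ∀ i j, b i j = ω i ^ (j : ℕ)) :
    Function.Bijective (phiMap p ω) := by
  constructor
  · apply inj_of_zero
    intro c hc
    funext q
    obtain ⟨i, j⟩ := q
    have hi : ∑ j', c ⟨i, j'⟩ • b i j' = 0 := by
      have := congrFun hc i
      simp only [phiMap, LinearMap.coe_mk, AddHom.coe_mk, Pi.zero_apply] at this ⊢
      rw [← this]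
      exact Finset.sum_congr rfl fun j' _ => by rw [hb]
    exact Fintype.linearIndependent_iff.mp (b i).linearIndependent _ hi j
  · intro x
    refine ⟨fun q => (b q.1).repr (x q.1) q.2, ?_⟩
    funext i
    simp only [phiMap, LinearMap.coe_mk, AddHom.coe_mk]
    calc ∑ j, (b i).repr (x i) j • ω i ^ (j : ℕ)
        = ∑ j, (b i).repr (x i) j • b i j :=
          Finset.sum_congr rfl fun j _ => by rw [hb]
      _ = x i := (b i).sum_repr (x i)

lemma lamMap_eq_phi_dot (L : (i : Fin s) → Fin (ns i) → Fin n → ZMod p)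
    (a : Fin n → ZMod p) :
    lamMap p ω L a = phiMap p ω (dotL (fun q : Σ i : Fin s, Fin (ns i) => L q.1 q.2) a) := by
  funext i
  simp only [lamMap_apply, phiMap, LinearMap.coe_mk, AddHom.coe_mk, dotL_apply]
  exact Finset.sum_congr rfl fun j _ => (Algebra.smul_def _ _).symm

lemma lamMap_bijective (hn : 1 ≤ n) (hs : 1 ≤ s) (hpos : ∀ i, 0 < ns i)
    (hsum : ∑ i, ns i = n)
    (b : (i : Fin s) → Module.Basis (Fin (ns i)) (ZMod p) (GaloisField p (ns i)))
    (hb : ∀ i j, b i j = ω i ^ (j : ℕ))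
    {L : (i : Fin s) → Fin (ns i) → Fin n → ZMod p}
    (hL : LinearIndependent (ZMod p) (fun q : Σ i : Fin s, Fin (ns i) => L q.1 q.2)) :
    Function.Bijective (lamMap p ω L) := by
  have hne : Nonempty (Σ i : Fin s, Fin (ns i)) := by
    refine ⟨⟨⟨0, hs⟩, ⟨0, hpos _⟩⟩⟩
  have hcard : Fintype.card (Σ i : Fin s, Fin (ns i)) = n := by
    simp [Fintype.card_sigma, hsum]
  have hdot := dotL_bijective hcard hL
  have hphi := phiMap_bijective p ω b hb
  have heq : (lamMap p ω L : (Fin n → ZMod p) → _) =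
      (phiMap p ω : _ → _) ∘ (dotL (fun q : Σ i : Fin s, Fin (ns i) => L q.1 q.2)) := by
    funext a
    exact lamMap_eq_phi_dot p ω L a
  rw [heq]
  exact hphi.comp hdot

end Main
section Main2

variable (p : ℕ) [Fact p.Prime] {n s : ℕ} {ns : Fin s → ℕ}
  (ω : (i : Fin s) → GaloisField p (ns i))

/-- componentwise multiplication by `(z i)⁻¹`. -/
noncomputable def zinvMap (z : (i : Fin s) → GaloisField p (ns i)) :
    ((i : Fin s) → GaloisField p (ns i)) →ₗ[ZMod p] ((i : Fin s) → GaloisField p (ns i)) where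
  toFun x := fun i => (z i)⁻¹ * x i
  map_add' a b := by funext i; simp [mul_add]
  map_smul' c a := by funext i; simp [Algebra.mul_smul_comm]

/-- componentwise multiplication by `z i`. -/
noncomputable def zmulMap (z : (i : Fin s) → GaloisField p (ns i)) :
    ((i : Fin s) → GaloisField p (ns i)) →ₗ[ZMod p] ((i : Fin s) → GaloisField p (ns i)) where
  toFun x := fun i => z i * x i
  map_add' a b := by funext i; simp [mul_add]
  map_smul' c a := by funext i; simp [Algebra.mul_smul_comm]

lemma zmulMap_bijective (z : (i : Fin s) → GaloisField p (ns i)) (hz : ∀ i, z i ≠ 0) :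
    Function.Bijective (zmulMap p z) := by
  constructor
  · apply inj_of_zero
    intro x hx
    funext i
    have := congrFun hx i
    simp only [zmulMap, LinearMap.coe_mk, AddHom.coe_mk, Pi.zero_apply] at this ⊢
    rcases mul_eq_zero.mp this with h | h
    · exact absurd h (hz i)
    · exact h
  · intro y
    refine ⟨fun i => (z i)⁻¹ * y i, ?_⟩
    funext i
    simp only [zmulMap, LinearMap.coe_mk, AddHom.coe_mk]
    rw [mul_inv_cancel_left₀ (hz i)]

/-- the map `T` whose graph is the lattice mod `p`. -/
noncomputable def Tmap (z : (i : Fin s) → GaloisField p (ns i))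
    (L L' : (i : Fin s) → Fin (ns i) → Fin n → ZMod p)
    (h' : Function.Bijective (lamMap p ω L')) :
    (Fin n → ZMod p) →ₗ[ZMod p] (Fin n → ZMod p) :=
  (LinearEquiv.ofBijective (lamMap p ω L') h').symm.toLinearMap ∘ₗ
    zinvMap p z ∘ₗ lamMap p ω L

lemma lamMap_Tmap (z : (i : Fin s) → GaloisField p (ns i))
    (L L' : (i : Fin s) → Fin (ns i) → Fin n → ZMod p)
    (h' : Function.Bijective (lamMap p ω L')) (a : Fin n → ZMod p) (i : Fin s) :
    lamMap p ω L' (Tmap p ω z L L' h' a) i = (z i)⁻¹ * lamMap p ω L a i := by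
  have : lamMap p ω L' (Tmap p ω z L L' h' a) =
      (LinearEquiv.ofBijective (lamMap p ω L') h')
        ((LinearEquiv.ofBijective (lamMap p ω L') h').symm
          (zinvMap p z (lamMap p ω L a))) := rfl
  rw [this, LinearEquiv.apply_symm_apply]
  rfl

lemma Tmap_bijective (z : (i : Fin s) → GaloisField p (ns i)) (hz : ∀ i, z i ≠ 0)
    (L L' : (i : Fin s) → Fin (ns i) → Fin n → ZMod p)
    (h : Function.Bijective (lamMap p ω L))
    (h' : Function.Bijective (lamMap p ω L')) :
    Function.Bijective (Tmap p ω z L L' h') := by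
  have h1 : Function.Bijective (zinvMap (ns := ns) p z) := by
    constructor
    · apply inj_of_zero
      intro x hx
      funext i
      have := congrFun hx i
      simp only [zinvMap, LinearMap.coe_mk, AddHom.coe_mk, Pi.zero_apply] at this ⊢
      rcases mul_eq_zero.mp this with hc | hc
      · exact absurd hc (inv_ne_zero (hz i))
      · exact hc
    · intro y
      refine ⟨fun i => z i * y i, ?_⟩
      funext i
      simp only [zinvMap, LinearMap.coe_mk, AddHom.coe_mk]
      rw [inv_mul_cancel_left₀ (hz i)]
  have h2 : Function.Bijective
      ((LinearEquiv.ofBijective (lamMap p ω L') h').symm.toLinearMap :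
        ((i : Fin s) → GaloisField p (ns i)) →ₗ[ZMod p] (Fin n → ZMod p)) :=
    (LinearEquiv.ofBijective (lamMap p ω L') h').symm.bijective
  exact h2.comp (h1.comp h)

lemma ker_char (z : (i : Fin s) → GaloisField p (ns i)) (hz : ∀ i, z i ≠ 0)
    (L L' : (i : Fin s) → Fin (ns i) → Fin n → ZMod p)
    (h' : Function.Bijective (lamMap p ω L')) (a b : Fin n → ZMod p) :
    (∀ i, lamMap p ω L a i = z i * lamMap p ω L' b i) ↔ b = Tmap p ω z L L' h' a := by
  constructor
  · intro hab
    have hb : lamMap p ω L' b = zinvMap p z (lamMap p ω L a) := by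
      funext i
      have : (zinvMap p z (lamMap p ω L a)) i = (z i)⁻¹ * lamMap p ω L a i := rfl
      rw [this, hab i, inv_mul_cancel_left₀ (hz i)]
    have : b = (LinearEquiv.ofBijective (lamMap p ω L') h').symm (lamMap p ω L' b) := by
      rw [show lamMap p ω L' b = (LinearEquiv.ofBijective (lamMap p ω L') h') b from rfl,
        LinearEquiv.symm_apply_apply]
    rw [this, hb]
    rfl
  · rintro rfl
    intro i
    rw [lamMap_Tmap, mul_inv_cancel_left₀ (hz i)]

/-- the "transpose" of an endomorphism w.r.t. the dot product. -/
noncomputable def Smap (T : (Fin n → ZMod p) →ₗ[ZMod p] (Fin n → ZMod p)) :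
    (Fin n → ZMod p) →ₗ[ZMod p] (Fin n → ZMod p) where
  toFun v := fun k' => ∑ k, v k * T (stdv k') k
  map_add' a b := by
    funext k'
    simp [add_mul, Finset.sum_add_distrib]
  map_smul' c a := by
    funext k'
    simp only [RingHom.id_apply, Pi.smul_apply, smul_eq_mul, Finset.mul_sum]
    exact Finset.sum_congr rfl fun k _ => by ring

lemma dot_Smap (T : (Fin n → ZMod p) →ₗ[ZMod p] (Fin n → ZMod p))
    (v a : Fin n → ZMod p) :
    ∑ k, v k * T a k = ∑ k', Smap p T v k' * a k' := by
  have hTa : T a = ∑ k', a k' • T (stdv k') := by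
    conv_lhs => rw [eq_sum_stdv a, map_sum]
    exact Finset.sum_congr rfl fun k' _ => by rw [map_smul]
  calc ∑ k, v k * T a k = ∑ k, ∑ k', v k * (a k' * T (stdv k') k) := by
        refine Finset.sum_congr rfl fun k _ => ?_
        rw [hTa, Finset.sum_apply, Finset.mul_sum]
        exact Finset.sum_congr rfl fun k' _ => by simp
    _ = ∑ k', ∑ k, v k * (a k' * T (stdv k') k) := Finset.sum_comm
    _ = ∑ k', Smap p T v k' * a k' := by
        refine Finset.sum_congr rfl fun k' _ => ?_
        have : Smap p T v k' = ∑ k, v k * T (stdv k') k := rfl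
        rw [this, Finset.sum_mul]
        exact Finset.sum_congr rfl fun k _ => by ring

lemma Smap_bijective (T : (Fin n → ZMod p) →ₗ[ZMod p] (Fin n → ZMod p))
    (hT : Function.Bijective T) : Function.Bijective (Smap p T) := by
  have hinj : Function.Injective (Smap p T) := by
    apply inj_of_zero
    intro v hv
    have hall : ∀ w : Fin n → ZMod p, ∑ k, v k * w k = 0 := by
      intro w
      obtain ⟨a, rfl⟩ := hT.2 w
      rw [dot_Smap, hv]
      simp
    funext k
    have := hall (stdv k)
    rwa [dot_stdv] at this
  exact ⟨hinj, (LinearMap.injective_iff_surjective_of_finrank_eq_finrank rfl).mp hinj⟩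

/-- extracting coordinates w.r.t. the bases `b i`. -/
noncomputable def reprMap
    (b : (i : Fin s) → Module.Basis (Fin (ns i)) (ZMod p) (GaloisField p (ns i))) :
    ((i : Fin s) → GaloisField p (ns i)) →ₗ[ZMod p]
      ((q : Σ i : Fin s, Fin (ns i)) → ZMod p) where
  toFun x := fun q => (b q.1).repr (x q.1) q.2
  map_add' a c := by funext q; simp
  map_smul' r a := by funext q; simp

lemma reprMap_bijective
    (b : (i : Fin s) → Module.Basis (Fin (ns i)) (ZMod p) (GaloisField p (ns i))) :
    Function.Bijective (reprMap p b) := by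
  constructor
  · apply inj_of_zero
    intro x hx
    funext i
    refine ((b i).forall_coord_eq_zero_iff).mp fun j => ?_
    have := congrFun hx ⟨i, j⟩
    simpa [reprMap, Module.Basis.coord_apply] using this
  · intro c
    refine ⟨fun i => ∑ j, c ⟨i, j⟩ • b i j, ?_⟩
    funext q
    obtain ⟨i, j⟩ := q
    simp only [reprMap, LinearMap.coe_mk, AddHom.coe_mk]
    rw [Module.Basis.repr_sum_self]

end Main2
section MainZ

variable (p : ℕ) [Fact p.Prime] {n s : ℕ} {ns : Fin s → ℕ}
  (ω : (i : Fin s) → GaloisField p (ns i))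

lemma lamForm_zero (L : (i : Fin s) → Fin (ns i) → Fin n → ZMod p) (i : Fin s)
    (w : Fin n → ℤ) (hw : ∀ k, ((w k : ℤ) : ZMod p) = 0) :
    lamForm p n s ns ω L i w = 0 := by
  unfold lamForm
  refine Finset.sum_eq_zero fun j _ => ?_
  have : (∑ k, L i j k * ((w k : ℤ) : ZMod p)) = 0 :=
    Finset.sum_eq_zero fun k _ => by rw [hw k, mul_zero]
  rw [this, map_zero, zero_mul]

end MainZ
/-- **Proposition 5.2.** For `z_i ∈ 𝔽_{p^{n_i}} \ {0}` and nonsingular coefficient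
matrices `A, A'`, the scaled dual of the lattice
`𝓛_z = {(x,y) ∈ ℤ^{2n} : λ_i(x) = z_i λ'_i(y) ∀ i}` has the same shape:
`p𝓛_z* = {(u,v) ∈ ℤ^{2n} : λ''_i(v) = z_i λ'''_i(u) ∀ i}` for some linear forms
`L''_{i,j}, L'''_{i,j}` with nonsingular coefficient matrices. -/
theorem dual_lattice_same_shape
    (p : ℕ) [Fact p.Prime] (n : ℕ) (hn : 1 ≤ n)
    (s : ℕ) (hs : 1 ≤ s) (ns : Fin s → ℕ) (hpos : ∀ i, 0 < ns i) (hsum : ∑ i, ns i = n)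
    (ω : (i : Fin s) → GaloisField p (ns i))
    (hω : ∀ i, ∃ b : Module.Basis (Fin (ns i)) (ZMod p) (GaloisField p (ns i)),
      ∀ j : Fin (ns i), b j = ω i ^ (j : ℕ))
    (z : (i : Fin s) → GaloisField p (ns i)) (hz : ∀ i, z i ≠ 0)
    (L L' : (i : Fin s) → Fin (ns i) → Fin n → ZMod p)
    (hL : LinearIndependent (ZMod p) (fun q : Σ i : Fin s, Fin (ns i) => L q.1 q.2))
    (hL' : LinearIndependent (ZMod p) (fun q : Σ i : Fin s, Fin (ns i) => L' q.1 q.2)) :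
    ∃ L'' L''' : (i : Fin s) → Fin (ns i) → Fin n → ZMod p,
      LinearIndependent (ZMod p) (fun q : Σ i : Fin s, Fin (ns i) => L'' q.1 q.2) ∧
      LinearIndependent (ZMod p) (fun q : Σ i : Fin s, Fin (ns i) => L''' q.1 q.2) ∧
      ∀ x : (Fin n ⊕ Fin n) → ℝ,
        ((p : ℝ)⁻¹ • x ∈ dualSet (latticeSetZ p n s ns ω z L L')) ↔
          ∃ u v : Fin n → ℤ,
            (∀ i, x (Sum.inl i) = ((u i : ℤ) : ℝ)) ∧
            (∀ i, x (Sum.inr i) = ((v i : ℤ) : ℝ)) ∧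
            ∀ i : Fin s, lamForm p n s ns ω L'' i v = z i * lamForm p n s ns ω L''' i u := by
  classical
  have hp0 : (p : ℝ) ≠ 0 := Nat.cast_ne_zero.mpr (Fact.out (p := p.Prime)).pos.ne'
  choose b hb using hω
  have hbijL := lamMap_bijective p ω hn hs hpos hsum b hb hL
  have hbijL' := lamMap_bijective p ω hn hs hpos hsum b hb hL'
  set T := Tmap p ω z L L' hbijL' with hTdef
  have hTbij : Function.Bijective T := Tmap_bijective p ω z hz L L' hbijL hbijL'
  set M := Smap p T with hMdef
  have hMbij : Function.Bijective M := Smap_bijective p T hTbij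
  set Ψ : (Fin n → ZMod p) →ₗ[ZMod p] ((q : Σ i : Fin s, Fin (ns i)) → ZMod p) :=
    reprMap p b ∘ₗ zmulMap p z ∘ₗ lamMap p ω L ∘ₗ (-M) with hΨdef
  have hnegM : Function.Bijective (⇑(-M) : (Fin n → ZMod p) → (Fin n → ZMod p)) := by
    have hfun : (⇑(-M) : (Fin n → ZMod p) → (Fin n → ZMod p)) = (fun v => -v) ∘ ⇑M := by
      funext v; simp
    rw [hfun]
    exact (Function.Involutive.bijective neg_involutive).comp hMbij
  have hΨbij : Function.Bijective Ψ := by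
    have hfun : (⇑Ψ : (Fin n → ZMod p) → _) =
        ⇑(reprMap p b) ∘ ⇑(zmulMap p z) ∘ ⇑(lamMap p ω L) ∘ ⇑(-M) := rfl
    rw [hfun]
    exact (reprMap_bijective p b).comp ((zmulMap_bijective p z hz).comp (hbijL.comp hnegM))
  refine ⟨fun i j k => Ψ (stdv k) ⟨i, j⟩, L, ?_, ?_, ?_⟩
  · -- linear independence of L''
    apply linearIndependent_of_dotL_surjective (F := ZMod p)
    have hfun : ⇑(dotL (fun q : Σ i : Fin s, Fin (ns i) => fun k => Ψ (stdv k) q)) = ⇑Ψ := by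
      funext x
      funext q
      exact (linear_eq_dot Ψ x q).symm
    rw [hfun]
    exact hΨbij.2
  · exact hL
  · -- key pointwise identity for the new lambda
    have hlamΨ : ∀ (a : Fin n → ZMod p) (i : Fin s),
        lamMap p ω (fun i j k => Ψ (stdv k) ⟨i, j⟩) a i
          = z i * lamMap p ω L (-(M a)) i := by
      intro a i
      rw [lamMap_apply]
      calc ∑ j, algebraMap (ZMod p) (GaloisField p (ns i))
              (∑ k, Ψ (stdv k) ⟨i, j⟩ * a k) * ω i ^ (j : ℕ)
          = ∑ j, Ψ a ⟨i, j⟩ • b i j := by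
            refine Finset.sum_congr rfl fun j _ => ?_
            rw [← linear_eq_dot, hb i j]
            exact (Algebra.smul_def _ _).symm
        _ = ∑ j, (b i).repr (z i * lamMap p ω L (-(M a)) i) j • b i j := by
            refine Finset.sum_congr rfl fun j _ => ?_
            congr 1
        _ = z i * lamMap p ω L (-(M a)) i := (b i).sum_repr _
    intro x
    constructor
    · -- forward direction
      intro hx
      -- every coordinate of x is an integer
      have hint : ∀ i0 : Fin n ⊕ Fin n, ∃ m : ℤ, x i0 = (m : ℝ) := by
        intro i0
        have hy : (fun i => if i = i0 then ((((p : ℤ)) : ℝ)) else 0)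
            ∈ latticeSetZ p n s ns ω z L L' := by
          refine ⟨fun i => if i = i0 then (p : ℤ) else 0,
            fun i => by by_cases h : i = i0 <;> simp [h], ?_⟩
          intro i
          rw [lamForm_zero p ω L i _
              (fun k => by by_cases h : Sum.inl k = i0 <;> simp [h]),
            lamForm_zero p ω L' i _
              (fun k => by by_cases h : Sum.inr k = i0 <;> simp [h]), mul_zero]
        obtain ⟨m, hm⟩ := hx _ hy
        refine ⟨m, ?_⟩
        simp only [Pi.smul_apply, smul_eq_mul, mul_ite, mul_zero,
          Finset.sum_ite_eq', Finset.mem_univ, if_true] at hm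
        rw [← hm]
        push_cast
        field_simp
      choose g hg using hint
      set u : Fin n → ℤ := fun k => g (Sum.inl k) with hu
      set v : Fin n → ℤ := fun k => g (Sum.inr k) with hv
      set ub : Fin n → ZMod p := fun k => ((u k : ℤ) : ZMod p) with hub
      set vb : Fin n → ZMod p := fun k => ((v k : ℤ) : ZMod p) with hvb
      -- orthogonality to the lattice mod p
      have hperp : ∀ a : Fin n → ZMod p,
          (∑ k, ub k * a k) + (∑ k, vb k * T a k) = 0 := by
        intro a
        choose a' ha' using fun k => ZMod.intCast_surjective (n := p) (a k)
        choose c' hc' using fun k => ZMod.intCast_surjective (n := p) (T a k)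
        set w : (Fin n ⊕ Fin n) → ℤ := Sum.elim a' c' with hw
        have hcastl : (fun k => ((w (Sum.inl k) : ℤ) : ZMod p)) = a := by
          funext k; simp only [hw, Sum.elim_inl]; exact ha' k
        have hcastr : (fun k => ((w (Sum.inr k) : ℤ) : ZMod p)) = T a := by
          funext k; simp only [hw, Sum.elim_inr]; exact hc' k
        have hy : (fun i => ((w i : ℤ) : ℝ)) ∈ latticeSetZ p n s ns ω z L L' := by
          refine ⟨w, fun i => rfl, ?_⟩
          intro i
          rw [lamForm_eq, lamForm_eq, hcastl, hcastr]
          exact (ker_char p ω z hz L L' hbijL' a (T a)).mpr rfl i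
        obtain ⟨m, hm⟩ := hx _ hy
        have hxw : ∀ i, x i = ((g i : ℤ) : ℝ) := hg
        have hm2 : (p : ℝ)⁻¹ * ((∑ i, g i * w i : ℤ) : ℝ) = (m : ℝ) := by
          rw [← hm]
          push_cast
          rw [Finset.mul_sum]
          refine Finset.sum_congr rfl fun i _ => ?_
          rw [Pi.smul_apply, smul_eq_mul, hxw i]
          ring
        have hm3 := congrArg (fun t => (p : ℝ) * t) hm2
        simp only [← mul_assoc, mul_inv_cancel₀ hp0, one_mul] at hm3
        have hmz' : (∑ i, g i * w i : ℤ) = (p : ℤ) * m := by exact_mod_cast hm3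
        have h4 : ((∑ i, g i * w i : ℤ) : ZMod p) = 0 := by
          rw [hmz']
          push_cast
          simp
        rw [← h4]
        push_cast
        rw [Fintype.sum_sum_type]
        congr 1
        · refine Finset.sum_congr rfl fun k _ => ?_
          have h5 : ((w (Sum.inl k) : ℤ) : ZMod p) = a k := congrFun hcastl k
          show ub k * a k = ((g (Sum.inl k) : ℤ) : ZMod p) * ((w (Sum.inl k) : ℤ) : ZMod p)
          rw [h5]
        · refine Finset.sum_congr rfl fun k _ => ?_
          have h5 : ((w (Sum.inr k) : ℤ) : ZMod p) = T a k := congrFun hcastr k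
          show vb k * T a k = ((g (Sum.inr k) : ℤ) : ZMod p) * ((w (Sum.inr k) : ℤ) : ZMod p)
          rw [h5]
      have huveq : ub = -(M vb) := by
        have hzero : ∀ a : Fin n → ZMod p, ∑ k, (ub + M vb) k * a k = 0 := by
          intro a
          have h1 := hperp a
          rw [dot_Smap p T vb a] at h1
          simpa [Pi.add_apply, add_mul, Finset.sum_add_distrib] using h1
        funext k
        have h6 := hzero (stdv k)
        rw [dot_stdv] at h6
        have h7 : ub k + M vb k = 0 := h6
        have h8 := eq_neg_of_add_eq_zero_left h7
        simpa using h8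
      refine ⟨u, v, fun k => hg (Sum.inl k), fun k => hg (Sum.inr k), ?_⟩
      intro i
      rw [lamForm_eq, lamForm_eq]
      rw [show (fun k => ((v k : ℤ) : ZMod p)) = vb from rfl,
        show (fun k => ((u k : ℤ) : ZMod p)) = ub from rfl]
      rw [hlamΨ vb i, huveq]
    · -- backward direction
      rintro ⟨u, v, hxu, hxv, hcond⟩
      set ub : Fin n → ZMod p := fun k => ((u k : ℤ) : ZMod p) with hub
      set vb : Fin n → ZMod p := fun k => ((v k : ℤ) : ZMod p) with hvb
      have huveq : -(M vb) = ub := by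
        apply hbijL.1
        funext i
        have h1 := hcond i
        rw [lamForm_eq, lamForm_eq] at h1
        rw [show (fun k => ((v k : ℤ) : ZMod p)) = vb from rfl,
          show (fun k => ((u k : ℤ) : ZMod p)) = ub from rfl] at h1
        rw [hlamΨ vb i] at h1
        exact mul_left_cancel₀ (hz i) h1
      intro y hy
      obtain ⟨w, hwy, hwcond⟩ := hy
      set ab : Fin n → ZMod p := fun k => ((w (Sum.inl k) : ℤ) : ZMod p) with hab
      set bb : Fin n → ZMod p := fun k => ((w (Sum.inr k) : ℤ) : ZMod p) with hbb
      have hT : bb = T ab := by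
        refine (ker_char p ω z hz L L' hbijL' ab bb).mp ?_
        intro i
        have := hwcond i
        rwa [lamForm_eq, lamForm_eq] at this
      -- the integer dot product is divisible by p
      set N : ℤ := (∑ k, u k * w (Sum.inl k)) + (∑ k, v k * w (Sum.inr k)) with hN
      have hNzero : ((N : ℤ) : ZMod p) = 0 := by
        rw [hN]
        push_cast
        have h1 : (∑ k, ub k * ab k) + (∑ k, vb k * T ab k) = 0 := by
          rw [dot_Smap p T vb ab, ← Finset.sum_add_distrib]
          refine Finset.sum_eq_zero fun k _ => ?_
          rw [← add_mul]
          have : ub k + M vb k = 0 := by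
            rw [← congrFun huveq k]
            simp
          rw [show ub k + M vb k = (0 : ZMod p) from this, zero_mul]
        rw [← hT] at h1
        rw [← h1]
      obtain ⟨m, hm⟩ := (ZMod.intCast_zmod_eq_zero_iff_dvd N p).mp hNzero
      refine ⟨m, ?_⟩
      have hsum2 : ∑ i, ((p : ℝ)⁻¹ • x) i * y i = (p : ℝ)⁻¹ * (N : ℝ) := by
        rw [hN]
        push_cast
        rw [mul_add, Finset.mul_sum, Finset.mul_sum, Fintype.sum_sum_type]
        congr 1
        · refine Finset.sum_congr rfl fun k _ => ?_
          rw [Pi.smul_apply, smul_eq_mul, hxu k, hwy (Sum.inl k)]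
          ring
        · refine Finset.sum_congr rfl fun k _ => ?_
          rw [Pi.smul_apply, smul_eq_mul, hxv k, hwy (Sum.inr k)]
          ring
      rw [hsum2, hm]
      push_cast
      field_simp
end
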